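/- For every s > 0, the continued fraction s + K_{n=1}^∞ ((2n−1)²/(2s)) equals 4·(Γ((3+s)/4)/Γ((1+s)/4))², where Γ is the Gamma function. -/

import Mathlib

open Filter Real

/-- Numerators of the convergents of a generalized continued fraction with
integer part `b₀`, partial numerators `a n` and partial denominators `b n` (for `n ≥ 1`). -/
noncomputable def cfNum (b₀ : ℝ) (a b : ℕ → ℝ) : ℕ → ℝ
  | 0 => b₀
  | 1 => b 1 * b₀ + a 1
  | n + 2 => b (n + 2) * cfNum b₀ a b (n + 1) + a (n + 2) * cfNum b₀ a b n

/-- Denominators of the convergents of a generalized continued fraction. -/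
noncomputable def cfDen (a b : ℕ → ℝ) : ℕ → ℝ
  | 0 => 1
  | 1 => b 1
  | n + 2 => b (n + 2) * cfDen a b (n + 1) + a (n + 2) * cfDen a b n

/-- `IsCFLimit b₀ a b L` means: the convergents of the generalized continued fraction
`b₀ + a 1 / (b 1 + a 2 / (b 2 + ⋯))` tend to `L`. -/
def IsCFLimit (b₀ : ℝ) (a b : ℕ → ℝ) (L : ℝ) : Prop :=
  Filter.Tendsto (fun n => cfNum b₀ a b n / cfDen a b n) Filter.atTop (nhds L)

/-! The differences of consecutive convergents form an alternating series whose terms `tₙ`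
decrease, and `1 / tₙ` grows at least like a harmonic series, so the continued fraction converges
to some `L(s) ≥ s`. Brouncker's bilinear identity between the convergents at `s` and at `s + 2`
gives `L(s) L(s + 2) = (s + 1)²`. The Gamma quotient `g(s)` satisfies the same functional
equation, because `Γ(x + 1) = x Γ(x)`, so `L / g` is `4`-periodic. Log-convexity of `Γ` gives
`g(s) ≤ s + 1`, hence `s / (s + 1) ≤ L / g ≤ (s + 3) / (s + 2)`; a periodic function tending
to `1` at infinity is identically `1`. -/

open Finset Topology

section ContinuedFraction

variable {b₀ : ℝ} {a b : ℕ → ℝ}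

lemma cfNum_add_two (n : ℕ) :
    cfNum b₀ a b (n + 2) = b (n + 2) * cfNum b₀ a b (n + 1) + a (n + 2) * cfNum b₀ a b n :=
  rfl

lemma cfDen_add_two (n : ℕ) :
    cfDen a b (n + 2) = b (n + 2) * cfDen a b (n + 1) + a (n + 2) * cfDen a b n := rfl

noncomputable def cfProd (a : ℕ → ℝ) (n : ℕ) : ℝ := ∏ i ∈ range (n + 1), a (i + 1)

lemma cfProd_succ (n : ℕ) : cfProd a (n + 1) = a (n + 2) * cfProd a n := by
  rw [cfProd, prod_range_succ, mul_comm, cfProd]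

lemma cfProd_pos (ha : ∀ n, 0 < a n) (n : ℕ) : 0 < cfProd a n :=
  prod_pos fun i _ => ha (i + 1)

lemma cfNum_mul_cfDen_sub (n : ℕ) :
    cfNum b₀ a b (n + 1) * cfDen a b n - cfNum b₀ a b n * cfDen a b (n + 1) =
      (-1) ^ n * cfProd a n := by
  induction n with
  | zero => simp only [cfNum, cfDen, cfProd, zero_add, range_one, prod_singleton]; ring
  | succ n ih =>
    rw [cfNum_add_two, cfDen_add_two, cfProd_succ, pow_succ]
    linear_combination (-a (n + 2)) * ih

lemma cfDen_pos (ha : ∀ n, 0 < a n) (hb : ∀ n, 0 < b n) (n : ℕ) : 0 < cfDen a b n := by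
  suffices ∀ n, 0 < cfDen a b n ∧ 0 < cfDen a b (n + 1) from (this n).1
  intro n
  induction n with
  | zero => exact ⟨one_pos, hb 1⟩
  | succ n ih =>
    rw [cfDen_add_two]
    exact ⟨ih.2, add_pos (mul_pos (hb _) ih.2) (mul_pos (ha _) ih.1)⟩

noncomputable def cfTerm (a b : ℕ → ℝ) (n : ℕ) : ℝ :=
  cfProd a n / (cfDen a b n * cfDen a b (n + 1))

lemma cfTerm_pos (ha : ∀ n, 0 < a n) (hb : ∀ n, 0 < b n) (n : ℕ) : 0 < cfTerm a b n :=
  div_pos (cfProd_pos ha n) (mul_pos (cfDen_pos ha hb n) (cfDen_pos ha hb (n + 1)))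

lemma cfNum_div_cfDen_succ_sub (ha : ∀ n, 0 < a n) (hb : ∀ n, 0 < b n) (n : ℕ) :
    cfNum b₀ a b (n + 1) / cfDen a b (n + 1) - cfNum b₀ a b n / cfDen a b n =
      (-1) ^ n * cfTerm a b n := by
  have h₀ := (cfDen_pos ha hb n).ne'
  have h₁ := (cfDen_pos ha hb (n + 1)).ne'
  rw [cfTerm, ← mul_div_assoc, ← cfNum_mul_cfDen_sub]
  field_simp

lemma cfNum_div_cfDen_eq_sum (ha : ∀ n, 0 < a n) (hb : ∀ n, 0 < b n) (n : ℕ) :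
    cfNum b₀ a b n / cfDen a b n = b₀ + ∑ i ∈ range n, (-1) ^ i * cfTerm a b i := by
  induction n with
  | zero => simp [cfNum, cfDen]
  | succ n ih =>
    rw [sum_range_succ, ← add_assoc, ← ih, ← cfNum_div_cfDen_succ_sub ha hb]
    ring

lemma inv_cfTerm_succ (ha : ∀ n, 0 < a n) (n : ℕ) :
    (cfTerm a b (n + 1))⁻¹ =
      (cfTerm a b n)⁻¹ + b (n + 2) * cfDen a b (n + 1) ^ 2 / cfProd a (n + 1) := by
  have hD := (cfProd_pos ha n).ne'
  have ha₂ := (ha (n + 2)).ne'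
  rw [cfTerm, cfTerm, inv_div, inv_div, cfDen_add_two, cfProd_succ]
  field_simp
  ring

lemma cfTerm_antitone (ha : ∀ n, 0 < a n) (hb : ∀ n, 0 < b n) : Antitone (cfTerm a b) := by
  refine antitone_nat_of_succ_le fun n => ?_
  rw [← inv_le_inv₀ (cfTerm_pos ha hb n) (cfTerm_pos ha hb (n + 1)), inv_cfTerm_succ ha]
  exact le_add_of_nonneg_right
    (div_nonneg (mul_nonneg (hb _).le (sq_nonneg _)) (cfProd_pos ha _).le)

lemma exists_isCFLimit_of_tendsto_cfTerm (ha : ∀ n, 0 < a n) (hb : ∀ n, 0 < b n)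
    (ht : Tendsto (cfTerm a b) atTop (𝓝 0)) : ∃ L, IsCFLimit b₀ a b L ∧ b₀ ≤ L := by
  obtain ⟨l, hl⟩ := (cfTerm_antitone ha hb).tendsto_alternating_series_of_tendsto_zero ht
  refine ⟨b₀ + l, ?_, ?_⟩
  · simp only [IsCFLimit, cfNum_div_cfDen_eq_sum ha hb]
    exact hl.const_add b₀
  · simpa using (cfTerm_antitone ha hb).alternating_series_le_tendsto hl 0

end ContinuedFraction

lemma tendsto_atTop_of_monotone_of_le_add_two_sub {w : ℕ → ℝ} (hw : Monotone w) {c : ℝ}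
    (hc : 0 < c) (h : ∀ n : ℕ, c / (n + 1) ≤ w (n + 2) - w n) : Tendsto w atTop atTop := by
  have hpair :
      ∀ n, w 0 + w 1 + c * ∑ i ∈ range n, 1 / ((i : ℝ) + 1) ≤ w n + w (n + 1) := by
    intro n
    induction n with
    | zero => simp
    | succ n ih =>
      rw [sum_range_succ, mul_add, mul_one_div]
      linarith [h n]
  have hlow : Tendsto (fun n => (w 0 + w 1 + c * ∑ i ∈ range n, 1 / ((i : ℝ) + 1)) / 2)
      atTop atTop :=
    (tendsto_atTop_add_const_left _ _
      (tendsto_sum_range_one_div_nat_succ_atTop.const_mul_atTop hc)).atTop_div_const two_pos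
  refine (tendsto_add_atTop_iff_nat 1).mp (tendsto_atTop_mono (fun n => ?_) hlow)
  linarith [hpair n, hw n.le_succ]

lemma eq_of_tendsto_of_le_even_of_odd_le {u : ℕ → ℝ} {l c : ℝ}
    (hu : Tendsto u atTop (𝓝 l)) (heven : ∀ k, u (2 * k) ≤ c)
    (hodd : ∀ k, c ≤ u (2 * k + 1)) : l = c := by
  have h₀ : Tendsto (fun k => 2 * k) atTop atTop :=
    tendsto_atTop_atTop_of_monotone (fun _ _ h => by omega) fun b => ⟨b, by omega⟩
  have h₁ : Tendsto (fun k => 2 * k + 1) atTop atTop :=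
    tendsto_atTop_atTop_of_monotone (fun _ _ h => by omega) fun b => ⟨b, by omega⟩
  exact le_antisymm (le_of_tendsto' (hu.comp h₀) heven) (ge_of_tendsto' (hu.comp h₁) hodd)

lemma tendsto_add_div_add_atTop (a b : ℝ) :
    Tendsto (fun x : ℝ => (x + a) / (x + b)) atTop (𝓝 1) := by
  have h : Tendsto (fun x : ℝ => 1 + (a - b) / (x + b)) atTop (𝓝 (1 + 0)) :=
    tendsto_const_nhds.add
      (tendsto_const_nhds.div_atTop (tendsto_atTop_add_const_right _ b tendsto_id))
  rw [add_zero] at h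
  refine h.congr' ?_
  filter_upwards [eventually_gt_atTop (-b)] with x hx
  have : x + b ≠ 0 := by linarith
  field_simp
  ring

lemma eq_of_tendsto_atTop_of_add_eq {f : ℝ → ℝ} {p c x : ℝ} (hp : 0 < p) (hx : 0 < x)
    (hf : ∀ y, 0 < y → f (y + p) = f y) (hlim : Tendsto f atTop (𝓝 c)) : f x = c := by
  have hk : ∀ k : ℕ, f (x + k * p) = f x := by
    intro k
    induction k with
    | zero => simp
    | succ k ih => rw [Nat.cast_succ, add_one_mul, ← add_assoc, hf _ (by positivity), ih]
  have hseq : Tendsto (fun k : ℕ => x + k * p) atTop atTop :=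
    tendsto_atTop_add_const_left _ _ (tendsto_natCast_atTop_atTop.atTop_mul_const hp)
  exact tendsto_const_nhds_iff.mp (by simpa only [Function.comp_def, hk] using hlim.comp hseq)

/-- Log-convexity of `Γ` at the midpoint of `x` and `x + 1`. -/
lemma Real.Gamma_add_half_sq_le {x : ℝ} (hx : 0 < x) :
    Gamma (x + 1 / 2) ^ 2 ≤ x * Gamma x ^ 2 := by
  have hΓ := Gamma_mul_add_mul_le_rpow_Gamma_mul_rpow_Gamma hx (show 0 < x + 1 by linarith)
    one_half_pos one_half_pos (by norm_num)
  rw [show 1 / 2 * x + 1 / 2 * (x + 1) = x + 1 / 2 by ring, ← sqrt_eq_rpow, ← sqrt_eq_rpow,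
    Gamma_add_one hx.ne'] at hΓ
  have hpos := Gamma_pos_of_pos hx
  calc Gamma (x + 1 / 2) ^ 2 ≤ (√(Gamma x) * √(x * Gamma x)) ^ 2 :=
        pow_le_pow_left₀ (Gamma_pos_of_pos (by linarith)).le hΓ 2
    _ = x * Gamma x ^ 2 := by
        rw [mul_pow, sq_sqrt hpos.le, sq_sqrt (by positivity)]
        ring

namespace Brouncker

def oddSq (n : ℕ) : ℝ := (2 * (n : ℝ) - 1) ^ 2

lemma oddSq_pos (n : ℕ) : 0 < oddSq n := by
  have : 2 * (n : ℝ) - 1 ≠ 0 := by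
    intro h
    have : (2 * n : ℝ) = 1 := by linarith
    norm_cast at this
    omega
  unfold oddSq
  positivity

lemma oddSq_add_two (n : ℕ) : oddSq (n + 2) = (2 * (n : ℝ) + 3) ^ 2 := by
  simp only [oddSq]
  push_cast
  ring

noncomputable def num (σ : ℝ) : ℕ → ℝ := cfNum σ oddSq fun _ => 2 * σ

noncomputable def den (σ : ℝ) : ℕ → ℝ := cfDen oddSq fun _ => 2 * σ

noncomputable def term (σ : ℝ) : ℕ → ℝ := cfTerm oddSq fun _ => 2 * σ

variable {σ : ℝ}

lemma num_add_two (n : ℕ) :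
    num σ (n + 2) = 2 * σ * num σ (n + 1) + (2 * (n : ℝ) + 3) ^ 2 * num σ n := by
  rw [num, cfNum_add_two, oddSq_add_two]

lemma den_add_two (n : ℕ) :
    den σ (n + 2) = 2 * σ * den σ (n + 1) + (2 * (n : ℝ) + 3) ^ 2 * den σ n := by
  rw [den, cfDen_add_two, oddSq_add_two]

lemma cfProd_oddSq_succ (n : ℕ) :
    cfProd oddSq (n + 1) = (2 * (n : ℝ) + 3) ^ 2 * cfProd oddSq n := by
  rw [cfProd_succ, oddSq_add_two]

lemma den_pos (hσ : 0 < σ) (n : ℕ) : 0 < den σ n :=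
  cfDen_pos oddSq_pos (fun _ => by positivity) n

noncomputable def crossForm (σ : ℝ) (m n : ℕ) : ℝ :=
  num σ m * num (σ + 2) n - (σ + 1) ^ 2 * (den σ m * den (σ + 2) n)

lemma crossForm_eq (n : ℕ) :
    crossForm σ n n = (-1) ^ (n + 1) * cfProd oddSq n ∧
    crossForm σ (n + 1) (n + 1) = (-1) ^ (n + 2) * cfProd oddSq (n + 1) ∧
    crossForm σ (n + 1) n = (-1) ^ n * cfProd oddSq n * (2 * n + 2 - σ) ∧
    crossForm σ n (n + 1) = (-1) ^ (n + 1) * cfProd oddSq n * (2 * n + 4 + σ) := by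
  induction n with
  | zero =>
    simp only [crossForm, num, den, cfNum, cfDen, cfProd, oddSq]
    refine ⟨?_, ?_, ?_, ?_⟩ <;> norm_num <;> ring
  | succ n ih =>
    obtain ⟨hE, hE', hF, hG⟩ := ih
    simp only [crossForm] at *
    refine ⟨hE', ?_, ?_, ?_⟩ <;> rw [cfProd_oddSq_succ] at hE' ⊢
    · rw [num_add_two, num_add_two, den_add_two, den_add_two, cfProd_oddSq_succ]
      push_cast
      linear_combination (2 * σ) * (2 * (σ + 2)) * hE' + (2 * σ) * (2 * (n : ℝ) + 3) ^ 2 * hF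
        + (2 * (σ + 2)) * (2 * (n : ℝ) + 3) ^ 2 * hG + ((2 * (n : ℝ) + 3) ^ 2) ^ 2 * hE
    · rw [num_add_two, den_add_two]
      push_cast
      linear_combination (2 * σ) * hE' + (2 * (n : ℝ) + 3) ^ 2 * hG
    · rw [num_add_two, den_add_two]
      push_cast
      linear_combination (2 * (σ + 2)) * hE' + (2 * (n : ℝ) + 3) ^ 2 * hF

lemma inv_term_monotone (hσ : 0 < σ) : Monotone fun n => (term σ n)⁻¹ := fun m n hmn =>
  (inv_le_inv₀ (cfTerm_pos oddSq_pos (fun _ => by positivity) m)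
    (cfTerm_pos oddSq_pos (fun _ => by positivity) n)).mpr
    (cfTerm_antitone oddSq_pos (fun _ => by positivity) hmn)

lemma inv_term_succ (n : ℕ) :
    (term σ (n + 1))⁻¹ =
      (term σ n)⁻¹ + 2 * σ * den σ (n + 1) ^ 2 / cfProd oddSq (n + 1) :=
  inv_cfTerm_succ oddSq_pos n

/-- AM-GM, as `cfProd oddSq (n + 2) = (2n + 5)² cfProd oddSq (n + 1)`. -/
lemma two_mul_inv_term_le (n : ℕ) :
    2 * (term σ (n + 1))⁻¹ / (2 * n + 5) ≤
      den σ (n + 1) ^ 2 / cfProd oddSq (n + 1) + den σ (n + 2) ^ 2 / cfProd oddSq (n + 2) := by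
  have hD := cfProd_pos oddSq_pos (n + 1)
  have hw : (term σ (n + 1))⁻¹ = den σ (n + 1) * den σ (n + 2) / cfProd oddSq (n + 1) := by
    rw [term, cfTerm, inv_div]; rfl
  have hprod : cfProd oddSq (n + 2) = (2 * (n : ℝ) + 5) ^ 2 * cfProd oddSq (n + 1) := by
    rw [cfProd_oddSq_succ]; push_cast; ring
  have hsq : den σ (n + 1) ^ 2 / cfProd oddSq (n + 1) + den σ (n + 2) ^ 2 / cfProd oddSq (n + 2)
      - 2 * (term σ (n + 1))⁻¹ / (2 * n + 5) =
      ((2 * n + 5) * den σ (n + 1) - den σ (n + 2)) ^ 2 /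
        ((2 * n + 5) ^ 2 * cfProd oddSq (n + 1)) := by
    rw [hw, hprod]
    field_simp
    ring
  have : 0 ≤ ((2 * n + 5) * den σ (n + 1) - den σ (n + 2)) ^ 2 /
      ((2 * n + 5) ^ 2 * cfProd oddSq (n + 1)) := by positivity
  linarith

lemma inv_term_add_two_sub_ge (hσ : 0 < σ) (n : ℕ) :
    4 * σ * (term σ 0)⁻¹ / 5 / (n + 1) ≤ (term σ (n + 2))⁻¹ - (term σ n)⁻¹ := by
  have hw₀ : 0 < (term σ 0)⁻¹ := inv_pos.mpr (cfTerm_pos oddSq_pos (fun _ => by positivity) 0)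
  have hw : (term σ 0)⁻¹ ≤ (term σ (n + 1))⁻¹ := inv_term_monotone hσ (Nat.zero_le _)
  have hw₁ := hw₀.trans_le hw
  calc 4 * σ * (term σ 0)⁻¹ / 5 / (n + 1)
      ≤ 4 * σ * (term σ (n + 1))⁻¹ / (2 * n + 5) := by
        rw [div_div]
        gcongr
        linarith
    _ = 2 * σ * (2 * (term σ (n + 1))⁻¹ / (2 * n + 5)) := by ring
    _ ≤ 2 * σ * (den σ (n + 1) ^ 2 / cfProd oddSq (n + 1) +
          den σ (n + 2) ^ 2 / cfProd oddSq (n + 2)) := by gcongr; exact two_mul_inv_term_le n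
    _ = (term σ (n + 2))⁻¹ - (term σ n)⁻¹ := by rw [inv_term_succ, inv_term_succ]; ring

lemma tendsto_term_zero (hσ : 0 < σ) : Tendsto (term σ) atTop (𝓝 0) := by
  have hw₀ : 0 < (term σ 0)⁻¹ := inv_pos.mpr (cfTerm_pos oddSq_pos (fun _ => by positivity) 0)
  simpa [Pi.inv_def] using (tendsto_atTop_of_monotone_of_le_add_two_sub (inv_term_monotone hσ)
    (by positivity) (inv_term_add_two_sub_ge hσ)).inv_tendsto_atTop

noncomputable def cfLimit (σ : ℝ) : ℝ := limUnder atTop fun n => num σ n / den σ n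

lemma exists_isCFLimit (hσ : 0 < σ) :
    ∃ L, IsCFLimit σ oddSq (fun _ => 2 * σ) L ∧ σ ≤ L :=
  exists_isCFLimit_of_tendsto_cfTerm oddSq_pos (fun _ => by positivity) (tendsto_term_zero hσ)

lemma tendsto_cfLimit (hσ : 0 < σ) :
    Tendsto (fun n => num σ n / den σ n) atTop (𝓝 (cfLimit σ)) := by
  obtain ⟨L, hL, -⟩ := exists_isCFLimit hσ
  exact tendsto_nhds_limUnder ⟨L, hL⟩

lemma le_cfLimit (hσ : 0 < σ) : σ ≤ cfLimit σ := by
  obtain ⟨L, hL, hσL⟩ := exists_isCFLimit hσ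
  have : cfLimit σ = L := hL.limUnder_eq
  rwa [this]

lemma num_div_den_mul_num_div_den (hσ : 0 < σ) (n : ℕ) :
    num σ n / den σ n * (num (σ + 2) n / den (σ + 2) n) =
      (σ + 1) ^ 2 + (-1) ^ (n + 1) * cfProd oddSq n / (den σ n * den (σ + 2) n) := by
  have h₁ := (den_pos hσ n).ne'
  have h₂ := (den_pos (show 0 < σ + 2 by linarith) n).ne'
  have hE := (crossForm_eq (σ := σ) n).1
  rw [crossForm] at hE
  field_simp
  linear_combination hE

lemma cfLimit_mul_cfLimit_add_two (hσ : 0 < σ) :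
    cfLimit σ * cfLimit (σ + 2) = (σ + 1) ^ 2 := by
  have hσ₂ : 0 < σ + 2 := by linarith
  have hdev : ∀ n, 0 ≤ cfProd oddSq n / (den σ n * den (σ + 2) n) := fun n =>
    (div_pos (cfProd_pos oddSq_pos n) (mul_pos (den_pos hσ n) (den_pos hσ₂ n))).le
  refine eq_of_tendsto_of_le_even_of_odd_le ((tendsto_cfLimit hσ).mul (tendsto_cfLimit hσ₂))
    (fun k => ?_) (fun k => ?_)
  · rw [num_div_den_mul_num_div_den hσ, (odd_two_mul_add_one k).neg_one_pow, neg_one_mul,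
      neg_div]
    linarith [hdev (2 * k)]
  · rw [num_div_den_mul_num_div_den hσ,
      (show Even (2 * k + 1 + 1) from ⟨k + 1, by ring⟩).neg_one_pow, one_mul]
    linarith [hdev (2 * k + 1)]

noncomputable def gammaQuot (σ : ℝ) : ℝ :=
  4 * (Gamma ((3 + σ) / 4) / Gamma ((1 + σ) / 4)) ^ 2

lemma gammaQuot_pos (hσ : -1 < σ) : 0 < gammaQuot σ := by
  have := Gamma_pos_of_pos (show 0 < (3 + σ) / 4 by linarith)
  have := Gamma_pos_of_pos (show 0 < (1 + σ) / 4 by linarith)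
  unfold gammaQuot
  positivity

lemma gammaQuot_mul_gammaQuot_add_two (hσ : -1 < σ) :
    gammaQuot σ * gammaQuot (σ + 2) = (σ + 1) ^ 2 := by
  have hu : 0 < (1 + σ) / 4 := by linarith
  have h₁ := (Gamma_pos_of_pos (show 0 < (3 + σ) / 4 by linarith)).ne'
  have h₂ := (Gamma_pos_of_pos hu).ne'
  rw [gammaQuot, gammaQuot, show (3 + (σ + 2)) / 4 = (1 + σ) / 4 + 1 by ring,
    show (1 + (σ + 2)) / 4 = (3 + σ) / 4 by ring, Gamma_add_one hu.ne']
  field_simp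
  ring

lemma gammaQuot_le (hσ : -1 < σ) : gammaQuot σ ≤ σ + 1 := by
  have hu : 0 < (1 + σ) / 4 := by linarith
  have hΓ := Gamma_pos_of_pos hu
  have hle := Gamma_add_half_sq_le hu
  rw [show (1 + σ) / 4 + 1 / 2 = (3 + σ) / 4 by ring] at hle
  rw [gammaQuot, div_pow, ← mul_div_assoc, div_le_iff₀ (by positivity)]
  linarith

lemma cfLimit_div_gammaQuot_mul (hσ : 0 < σ) :
    cfLimit σ / gammaQuot σ * (cfLimit (σ + 2) / gammaQuot (σ + 2)) = 1 := by
  have h₁ := (gammaQuot_pos (show -1 < σ by linarith)).ne'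
  have h₂ := (gammaQuot_pos (show -1 < σ + 2 by linarith)).ne'
  rw [div_mul_div_comm, cfLimit_mul_cfLimit_add_two hσ,
    gammaQuot_mul_gammaQuot_add_two (by linarith), div_self (by positivity)]

lemma cfLimit_div_gammaQuot_mem_Icc (hσ : 0 < σ) :
    cfLimit σ / gammaQuot σ ∈ Set.Icc (σ / (σ + 1)) ((σ + 3) / (σ + 2)) := by
  have hσ₂ : 0 < σ + 2 := by linarith
  have hg := gammaQuot_pos (show -1 < σ by linarith)
  have hL₂ := le_cfLimit hσ₂
  constructor
  · exact div_le_div₀ (hσ.le.trans (le_cfLimit hσ)) (le_cfLimit hσ) hg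
      (gammaQuot_le (by linarith))
  · rw [eq_inv_of_mul_eq_one_left (cfLimit_div_gammaQuot_mul hσ), inv_div]
    calc gammaQuot (σ + 2) / cfLimit (σ + 2) ≤ (σ + 2 + 1) / (σ + 2) :=
          div_le_div₀ (by linarith) (gammaQuot_le (by linarith)) hσ₂ hL₂
      _ = (σ + 3) / (σ + 2) := by ring

lemma tendsto_cfLimit_div_gammaQuot :
    Tendsto (fun σ => cfLimit σ / gammaQuot σ) atTop (𝓝 1) := by
  have hlow : Tendsto (fun σ : ℝ => σ / (σ + 1)) atTop (𝓝 1) := by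
    simpa using tendsto_add_div_add_atTop 0 1
  refine tendsto_of_tendsto_of_tendsto_of_le_of_le' hlow (tendsto_add_div_add_atTop 3 2) ?_ ?_
  · filter_upwards [eventually_gt_atTop 0] with σ hσ using (cfLimit_div_gammaQuot_mem_Icc hσ).1
  · filter_upwards [eventually_gt_atTop 0] with σ hσ using (cfLimit_div_gammaQuot_mem_Icc hσ).2

lemma cfLimit_eq_gammaQuot (hσ : 0 < σ) : cfLimit σ = gammaQuot σ := by
  have hper : ∀ y, 0 < y → cfLimit (y + 4) / gammaQuot (y + 4) = cfLimit y / gammaQuot y := by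
    intro y hy
    have h₀ := cfLimit_div_gammaQuot_mul hy
    have h₂ := cfLimit_div_gammaQuot_mul (show 0 < y + 2 by linarith)
    rw [show y + 2 + 2 = y + 4 by ring] at h₂
    exact mul_left_cancel₀ (right_ne_zero_of_mul_eq_one h₀)
      (h₂.trans (h₀.symm.trans (mul_comm _ _)))
  have := eq_of_tendsto_atTop_of_add_eq four_pos hσ hper tendsto_cfLimit_div_gammaQuot
  exact (div_eq_one_iff_eq (gammaQuot_pos (by linarith)).ne').mp this

end Brouncker

theorem ramanujan_brouncker (s : ℝ) (hs : 0 < s) :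
    IsCFLimit s (fun n => (2 * (n : ℝ) - 1) ^ 2) (fun _ => 2 * s)
      (4 * (Real.Gamma ((3 + s) / 4) / Real.Gamma ((1 + s) / 4)) ^ 2) := by
  have h := Brouncker.tendsto_cfLimit hs
  rw [Brouncker.cfLimit_eq_gammaQuot hs] at h
  exact h
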